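/- arXiv:dg-ga/9410005 — 6 statements merged into one kernel-verified Lean document; each statement's English description precedes it below -/
import Mathlib

section
/- Let U ⊆ ℝ^{2m} ≅ ℂ^m be open, let M : U → so(m,ℂ) be any map into the skew-symmetric complex m×m matrices, and let φ : U → ℂ be a smooth M-holomorphic map. Then Σ_{i=1}^{2m} (∂φ/∂x^i)² = 0 at every point of U, i.e. φ is horizontally weakly conformal (equivalently, Σ_{j=1}^m (∂φ/∂q^j)(∂φ/∂q̄^j) = 0 on U). -/
open Complex BigOperators Matrix

/-- Partial derivative in the direction of the real coordinate `x^{2j-1}`,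
identifying `ℝ^{2m} ≅ ℂ^m` via `q^j = x^{2j-1} + i x^{2j}`. -/
noncomputable def pdRe {m : ℕ} (f : (Fin m → ℂ) → ℂ) (j : Fin m) (x : Fin m → ℂ) : ℂ :=
  fderiv ℝ f x (Pi.single j 1)

/-- Partial derivative in the direction of the real coordinate `x^{2j}`. -/
noncomputable def pdIm {m : ℕ} (f : (Fin m → ℂ) → ℂ) (j : Fin m) (x : Fin m → ℂ) : ℂ :=
  fderiv ℝ f x (Pi.single j Complex.I)

/-- Wirtinger derivative `∂f/∂q^j = ½(∂f/∂x^{2j-1} − i ∂f/∂x^{2j})`. -/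
noncomputable def wdq {m : ℕ} (f : (Fin m → ℂ) → ℂ) (j : Fin m) (x : Fin m → ℂ) : ℂ :=
  (pdRe f j x - Complex.I * pdIm f j x) / 2

/-- Wirtinger derivative `∂f/∂q̄^j = ½(∂f/∂x^{2j-1} + i ∂f/∂x^{2j})`. -/
noncomputable def wdqbar {m : ℕ} (f : (Fin m → ℂ) → ℂ) (j : Fin m) (x : Fin m → ℂ) : ℂ :=
  (pdRe f j x + Complex.I * pdIm f j x) / 2

/-- Laplacian `Δf = Σ_{i=1}^{2m} ∂²f/(∂x^i)²`. -/
noncomputable def lap {m : ℕ} (f : (Fin m → ℂ) → ℂ) (x : Fin m → ℂ) : ℂ :=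
  ∑ j, (pdRe (fun y => pdRe f j y) j x + pdIm (fun y => pdIm f j y) j x)

/-- The horizontal weak conformality quantity `Σ_{i=1}^{2m} (∂f/∂x^i)²`. -/
noncomputable def hwc {m : ℕ} (f : (Fin m → ℂ) → ℂ) (x : Fin m → ℂ) : ℂ :=
  ∑ j, ((pdRe f j x) ^ 2 + (pdIm f j x) ^ 2)

/-- an `M`-holomorphic map (holomorphic with respect to the almost
Hermitian structure `J(M)` given by a skew-symmetric matrix valued function `M`)
is horizontally weakly conformal: `Σ_{i=1}^{2m} (∂φ/∂x^i)² = 0`, equivalently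
`Σ_{j=1}^m (∂φ/∂q^j)(∂φ/∂q̄^j) = 0`, on `U`. -/
theorem hwc_of_Mholomorphic {m : ℕ} (U : Set (Fin m → ℂ)) (hU : IsOpen U)
    (M : (Fin m → ℂ) → Matrix (Fin m) (Fin m) ℂ)
    (hskew : ∀ q ∈ U, (M q)ᵀ = -(M q))
    (φ : (Fin m → ℂ) → ℂ) (hφ : ContDiffOn ℝ (⊤ : ℕ∞) φ U)
    (hhol : ∀ q ∈ U, ∀ i, wdqbar φ i q + ∑ j, M q j i * wdq φ j q = 0) :
    ∀ q ∈ U, hwc φ q = 0 ∧ ∑ j, wdq φ j q * wdqbar φ j q = 0 := by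
  intro q hq
  have hM : ∀ i j, M q i j = - M q j i := by
    intro i j
    have := congrFun (congrFun (hskew q hq) j) i
    simpa [Matrix.transpose_apply] using this
  have h1 : ∀ i, wdqbar φ i q = -∑ j, M q j i * wdq φ j q := by
    intro i
    have := hhol q hq i
    linear_combination this
  have key : ∑ j, wdq φ j q * wdqbar φ j q = 0 := by
    have h2 : ∑ i, wdq φ i q * wdqbar φ i q
        = -∑ i, ∑ j, M q j i * (wdq φ j q * wdq φ i q) := by
      rw [← Finset.sum_neg_distrib]
      refine Finset.sum_congr rfl fun i _ => ?_
      rw [h1 i, mul_neg, Finset.mul_sum]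
      congr 1
      refine Finset.sum_congr rfl fun j _ => ?_
      ring
    have h3 : ∑ i, ∑ j, M q j i * (wdq φ j q * wdq φ i q) = 0 := by
      have hswap : ∑ i, ∑ j, M q j i * (wdq φ j q * wdq φ i q)
          = ∑ j, ∑ i, M q j i * (wdq φ j q * wdq φ i q) := Finset.sum_comm
      have : ∑ i, ∑ j, M q j i * (wdq φ j q * wdq φ i q)
          = -∑ i, ∑ j, M q j i * (wdq φ j q * wdq φ i q) := by
        conv_lhs => rw [hswap]
        rw [← Finset.sum_neg_distrib]
        refine Finset.sum_congr rfl fun j _ => ?_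
        rw [← Finset.sum_neg_distrib]
        refine Finset.sum_congr rfl fun i _ => ?_
        rw [hM j i]; ring
      linear_combination this / 2
    rw [h2, h3, neg_zero]
  refine ⟨?_, key⟩
  have h4 : hwc φ q = 4 * ∑ j, wdq φ j q * wdqbar φ j q := by
    unfold hwc wdq wdqbar
    rw [Finset.mul_sum]
    refine Finset.sum_congr rfl fun j _ => ?_
    linear_combination (pdIm φ j q) ^ 2 * Complex.I_sq
  rw [h4, key, mul_zero]
end

section
/- (Lemma 'Laplacian1'.) Let U ⊆ ℝ^{2m} ≅ ℂ^m be open, let M : U → so(m,ℂ) be a C¹ map into the skew-symmetric complex m×m matrices, and let φ : U → ℂ^k be a C² map that is M-holomorphic. Then, componentwise on U, (1/4)Δφ = − Σ_{i,j=1}^m (∂M^i_{j̄}/∂q^j) · (∂φ/∂q^i). -/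
open Complex BigOperators Matrix

/-! Differentiating the holomorphicity equation `∂φ/∂q̄^i = -Σ_j M^j_ī ∂φ/∂q^j` in `q^i` and
summing over `i` gives `¼Δφ = Σ_i ∂²φ/∂q^i∂q̄^i` on the left. On the right, the terms carrying
second derivatives of `φ` pair the skew-symmetric `M` with the symmetric matrix `∂²φ/∂q^i∂q^j`,
so they cancel, and only the derivatives of `M` survive. -/

open Finset Filter Topology

theorem fderiv_fderiv_apply_eq {E F : Type*} [NormedAddCommGroup E] [NormedSpace ℝ E]
    [NormedAddCommGroup F] [NormedSpace ℝ F] {f : E → F} {x : E}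
    (h : DifferentiableAt ℝ (fderiv ℝ f) x) (v w : E) :
    fderiv ℝ (fun y => fderiv ℝ f y w) x v = fderiv ℝ (fderiv ℝ f) x v w := by
  rw [fderiv_clm_apply h (differentiableAt_const w)]
  simp

theorem sum_sum_mul_eq_zero_of_skew_of_symm {n R : Type*} [Fintype n] [CommRing R]
    [NoZeroDivisors R] [CharZero R] {A S : Matrix n n R} (hA : Aᵀ = -A) (hS : Sᵀ = S) :
    ∑ i, ∑ j, A j i * S i j = 0 := by
  have hA' : ∀ i j, A j i = -A i j := fun i j => congrFun₂ hA i j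
  have hS' : ∀ i j, S j i = S i j := fun i j => congrFun₂ hS i j
  rw [← self_eq_neg, ← sum_neg_distrib, sum_comm]
  refine sum_congr rfl fun i _ => ?_
  rw [← sum_neg_distrib]
  exact sum_congr rfl fun j _ => by rw [hA', hS']; ring

theorem ContDiffAt.differentiableAt_fderiv {𝕜 E F : Type*} [NontriviallyNormedField 𝕜]
    [NormedAddCommGroup E] [NormedSpace 𝕜 E] [NormedAddCommGroup F] [NormedSpace 𝕜 F]
    {f : E → F} {x : E} (hf : ContDiffAt 𝕜 2 f x) : DifferentiableAt 𝕜 (fderiv 𝕜 f) x :=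
  (hf.fderiv_right (m := 1) le_rfl).differentiableAt one_ne_zero

namespace Wirtinger

variable {m : ℕ} {f a b : (Fin m → ℂ) → ℂ} {q : Fin m → ℂ} {i j : Fin m}

theorem wdq_apply :
    wdq f j q = (fderiv ℝ f q (Pi.single j 1) - I * fderiv ℝ f q (Pi.single j I)) / 2 := rfl

theorem fderiv_wdq_apply (h : DifferentiableAt ℝ (fderiv ℝ f) q) (v : Fin m → ℂ) :
    fderiv ℝ (wdq f j) q v = (fderiv ℝ (fderiv ℝ f) q v (Pi.single j 1)
      - I * fderiv ℝ (fderiv ℝ f) q v (Pi.single j I)) / 2 := by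
  have hre := h.hasFDerivAt.clm_apply (hasFDerivAt_const (Pi.single j (1 : ℂ)) q)
  have him := h.hasFDerivAt.clm_apply (hasFDerivAt_const (Pi.single j I) q)
  have hwdq : HasFDerivAt (wdq f j) _ q :=
    ((hre.sub (him.const_mul I)).const_mul (2⁻¹ : ℂ)).congr_of_eventuallyEq
      (.of_forall fun _ => div_eq_inv_mul _ _)
  rw [hwdq.fderiv]
  simp
  ring

theorem differentiableAt_wdq (h : DifferentiableAt ℝ (fderiv ℝ f) q) :
    DifferentiableAt ℝ (wdq f j) q := by
  unfold wdq pdRe pdIm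
  fun_prop

theorem fderiv_wdqbar_apply (h : DifferentiableAt ℝ (fderiv ℝ f) q) (v : Fin m → ℂ) :
    fderiv ℝ (wdqbar f j) q v = (fderiv ℝ (fderiv ℝ f) q v (Pi.single j 1)
      + I * fderiv ℝ (fderiv ℝ f) q v (Pi.single j I)) / 2 := by
  have hre := h.hasFDerivAt.clm_apply (hasFDerivAt_const (Pi.single j (1 : ℂ)) q)
  have him := h.hasFDerivAt.clm_apply (hasFDerivAt_const (Pi.single j I) q)
  have hwdqbar : HasFDerivAt (wdqbar f j) _ q :=
    ((hre.add (him.const_mul I)).const_mul (2⁻¹ : ℂ)).congr_of_eventuallyEq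
      (.of_forall fun _ => div_eq_inv_mul _ _)
  rw [hwdqbar.fderiv]
  simp
  ring

theorem wdq_wdq_comm (hf : ContDiffAt ℝ 2 f q) : wdq (wdq f j) i q = wdq (wdq f i) j q := by
  have hd := hf.differentiableAt_fderiv
  have hB := hf.isSymmSndFDerivAt (by simp)
  simp only [wdq_apply (f := wdq _ _), fderiv_wdq_apply hd, hB (Pi.single i _) (Pi.single j _)]
  ring

theorem lap_eq_four_mul_sum_wdq_wdqbar (hf : ContDiffAt ℝ 2 f q) :
    lap f q = 4 * ∑ j, wdq (wdqbar f j) j q := by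
  have hd := hf.differentiableAt_fderiv
  have hB := hf.isSymmSndFDerivAt (by simp)
  simp only [lap, pdRe, pdIm, fderiv_fderiv_apply_eq hd, wdq_apply (f := wdqbar _ _),
    fderiv_wdqbar_apply hd, mul_sum, hB (Pi.single _ 1) (Pi.single _ I)]
  refine sum_congr rfl fun j _ => ?_
  linear_combination fderiv ℝ (fderiv ℝ f) q (Pi.single j I) (Pi.single j I) * I_sq

theorem _root_.Filter.EventuallyEq.wdq_eq {g : (Fin m → ℂ) → ℂ} (h : f =ᶠ[𝓝 q] g) :
    wdq f j q = wdq g j q := by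
  simp only [wdq_apply, h.fderiv_eq]

theorem wdq_neg : wdq (fun x => -f x) j q = -wdq f j q := by
  simp only [wdq_apply, fderiv_fun_neg]
  simp
  ring

theorem wdq_sum {ι : Type*} (s : Finset ι) {F : ι → (Fin m → ℂ) → ℂ}
    (hF : ∀ i ∈ s, DifferentiableAt ℝ (F i) q) :
    wdq (fun x => ∑ i ∈ s, F i x) j q = ∑ i ∈ s, wdq (F i) j q := by
  simp only [wdq_apply, fderiv_fun_sum hF]
  simp [mul_sum, ← sum_sub_distrib, ← sum_div]

theorem wdq_mul (ha : DifferentiableAt ℝ a q) (hb : DifferentiableAt ℝ b q) :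
    wdq (fun x => a x * b x) j q = wdq a j q * b q + a q * wdq b j q := by
  simp only [wdq_apply, fderiv_fun_mul ha hb]
  simp
  ring

end Wirtinger

open Wirtinger in
/-- Lemma `Laplacian1`: if `φ : U → ℂ^k` is `M`-holomorphic, with `M` a
`C¹` map into the skew-symmetric complex `m×m` matrices, then componentwise
`(1/4)Δφ = − Σ_{i,j} (∂M^i_{j̄}/∂q^j)(∂φ/∂q^i)`. -/
theorem laplacian_of_Mholomorphic {m k : ℕ} (U : Set (Fin m → ℂ)) (hU : IsOpen U)
    (M : (Fin m → ℂ) → Matrix (Fin m) (Fin m) ℂ)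
    (hskew : ∀ q ∈ U, (M q)ᵀ = -(M q))
    (hM : ∀ i j, ContDiffOn ℝ 1 (fun q => M q i j) U)
    (φ : (Fin m → ℂ) → Fin k → ℂ)
    (hφ : ∀ a, ContDiffOn ℝ 2 (fun q => φ q a) U)
    (hhol : ∀ q ∈ U, ∀ i, ∀ a,
      wdqbar (fun x => φ x a) i q + ∑ j, M q j i * wdq (fun x => φ x a) j q = 0) :
    ∀ q ∈ U, ∀ a, (1/4 : ℂ) * lap (fun x => φ x a) q
      = - ∑ i, ∑ j, wdq (fun x => M x i j) j q * wdq (fun x => φ x a) i q := by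
  intro q hq a
  set f := fun x => φ x a
  have hf : ContDiffAt ℝ 2 f q := (hφ a).contDiffAt (hU.mem_nhds hq)
  have hMq : ∀ i j, DifferentiableAt ℝ (fun x => M x i j) q := fun i j =>
    ((hM i j).contDiffAt (hU.mem_nhds hq)).differentiableAt one_ne_zero
  have hwdqf : ∀ j, DifferentiableAt ℝ (wdq f j) q := fun _ =>
    differentiableAt_wdq hf.differentiableAt_fderiv
  have hwdq_wdqbar : ∀ i, wdq (wdqbar f i) i q = -∑ j,
      (wdq (fun x => M x j i) i q * wdq f j q + M q j i * wdq (wdq f j) i q) := by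
    intro i
    have hdbar : wdqbar f i =ᶠ[𝓝 q] fun x => -∑ j, M x j i * wdq f j x :=
      eventually_of_mem (hU.mem_nhds hq) fun x hx => eq_neg_of_add_eq_zero_left (hhol x hx i a)
    have hterm : ∀ j, DifferentiableAt ℝ (fun x => M x j i * wdq f j x) q := fun j =>
      (hMq j i).mul (hwdqf j)
    rw [hdbar.wdq_eq, wdq_neg, wdq_sum _ fun j _ => hterm j]
    simp only [wdq_mul (hMq _ i) (hwdqf _)]
  have hskew_symm : ∑ i, ∑ j, M q j i * wdq (wdq f j) i q = 0 :=
    sum_sum_mul_eq_zero_of_skew_of_symm (S := .of fun i j => wdq (wdq f j) i q) (hskew q hq)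
      (by ext i j; exact wdq_wdq_comm hf)
  rw [lap_eq_four_mul_sum_wdq_wdqbar hf]
  simp only [hwdq_wdqbar, neg_add, sum_add_distrib, sum_neg_distrib, hskew_symm, neg_zero,
    add_zero]
  rw [sum_comm]
  ring
end

section
/- (Laplacian when the Hermitian structure is constant along the fibres.) Let U ⊆ ℝ^{2m} ≅ ℂ^m and V ⊆ ℂ^k be open, let M : V → so(m,ℂ) be holomorphic, and let z : U → V be a smooth map that is (M∘z)-holomorphic, i.e. ∂z^a/∂q̄^i + Σ_{j=1}^m M^j_{ī}(z(q)) ∂z^a/∂q^j = 0 for all i and all components a. Set A^a_i := ∂z^a/∂q^i. Then for each a = 1,…,k, (1/4)Δz^a = − Σ_{i,j=1}^m Σ_{b=1}^k A^a_i A^b_j (∂M^i_{j̄}/∂z^b)(z(q)). -/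
open Complex BigOperators Matrix

/-!
Since `Δ = 4 Σᵢ ∂_{qⁱ} ∂_{q̄ⁱ}`, apply `∂_{qⁱ}` to the structure equation
`∂z^a/∂q̄ⁱ = -Σⱼ Mʲᵢ(z) ∂z^a/∂qʲ` and sum over `i`. By the Leibniz rule this produces two terms.
The one carrying the second derivatives `∂_{qⁱ}∂_{qʲ}z^a` contracts the skew matrix `M(z)` with a
symmetric one, so it vanishes; the chain rule for the holomorphic entries of `M` turns the other
into the right-hand side.
-/

open Topology

theorem Matrix.trace_mul_eq_zero_of_transpose_eq_neg {n R : Type*} [Fintype n] [CommRing R]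
    [NoZeroDivisors R] [CharZero R] {S T : Matrix n n R} (hS : Sᵀ = -S) (hT : Tᵀ = T) :
    (S * T).trace = 0 := by
  refine self_eq_neg.mp ?_
  calc (S * T).trace = (S * T)ᵀ.trace := (trace_transpose _).symm
    _ = -(S * T).trace := by rw [transpose_mul, hS, hT, mul_neg, trace_neg, trace_mul_comm]

theorem hasFDerivAt_fderiv_apply {E F : Type*} [NormedAddCommGroup E] [NormedSpace ℝ E]
    [NormedAddCommGroup F] [NormedSpace ℝ F] {f : E → F} {q : E} (hf : ContDiffAt ℝ 2 f q)
    (w : E) : HasFDerivAt (fun x => fderiv ℝ f x w) ((fderiv ℝ (fderiv ℝ f) q).flip w) q := by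
  have hdf : DifferentiableAt ℝ (fderiv ℝ f) q :=
    (hf.fderiv_right (m := 1) le_rfl).differentiableAt one_ne_zero
  simpa using hdf.hasFDerivAt.clm_apply (hasFDerivAt_const w q)

theorem fderiv_comp_apply_eq_sum {E : Type*} [NormedAddCommGroup E] [NormedSpace ℝ E] {k : ℕ}
    {g : (Fin k → ℂ) → ℂ} {z : E → Fin k → ℂ} {q : E} (hg : DifferentiableAt ℂ g (z q))
    (hz : DifferentiableAt ℝ z q) (v : E) :
    fderiv ℝ (fun x => g (z x)) q v
      = ∑ b, fderiv ℝ (fun x => z x b) q v * fderiv ℂ g (z q) (Pi.single b 1) := by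
  rw [fderiv_fun_comp q (hg.restrictScalars ℝ) hz, ContinuousLinearMap.comp_apply,
    hg.fderiv_restrictScalars ℝ, ContinuousLinearMap.coe_restrictScalars',
    pi_eq_sum_univ' (fderiv ℝ z q v)]
  simp only [map_sum, map_smul, smul_eq_mul, fderiv_apply hz, ContinuousLinearMap.comp_apply,
    ContinuousLinearMap.proj_apply]

section Wirtinger
variable {m : ℕ} {f g : (Fin m → ℂ) → ℂ} {q : Fin m → ℂ}

theorem Filter.EventuallyEq.wdq_eq_s4 (h : f =ᶠ[𝓝 q] g) (j : Fin m) :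
    wdq f j q = wdq g j q := by
  simp only [wdq, pdRe, pdIm, h.fderiv_eq]

theorem wdq_neg (j : Fin m) : wdq (fun x => -f x) j q = -wdq f j q := by
  simp only [wdq, pdRe, pdIm, fderiv_fun_neg, _root_.neg_apply]
  ring

theorem wdq_mul (hf : DifferentiableAt ℝ f q) (hg : DifferentiableAt ℝ g q) (j : Fin m) :
    wdq (fun x => f x * g x) j q = wdq f j q * g q + f q * wdq g j q := by
  simp only [wdq, pdRe, pdIm, fderiv_fun_mul hf hg, _root_.add_apply, _root_.smul_apply,
    smul_eq_mul]
  ring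

theorem wdq_sum {ι : Type*} {s : Finset ι} {F : ι → (Fin m → ℂ) → ℂ}
    (hF : ∀ i ∈ s, DifferentiableAt ℝ (F i) q) (j : Fin m) :
    wdq (fun x => ∑ i ∈ s, F i x) j q = ∑ i ∈ s, wdq (F i) j q := by
  simp only [wdq, pdRe, pdIm, fderiv_fun_sum hF, FunLike.coe_sum, Finset.sum_apply,
    Finset.mul_sum, ← Finset.sum_sub_distrib, Finset.sum_div]

theorem wdq_comp {k : ℕ} {g : (Fin k → ℂ) → ℂ} {z : (Fin m → ℂ) → Fin k → ℂ}
    (hg : DifferentiableAt ℂ g (z q)) (hz : DifferentiableAt ℝ z q) (j : Fin m) :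
    wdq (fun x => g (z x)) j q
      = ∑ b, wdq (fun x => z x b) j q * fderiv ℂ g (z q) (Pi.single b 1) := by
  simp only [wdq, pdRe, pdIm, fderiv_comp_apply_eq_sum hg hz, Finset.mul_sum,
    ← Finset.sum_sub_distrib, Finset.sum_div]
  exact Finset.sum_congr rfl fun b _ => by ring

theorem hasFDerivAt_wdq (hf : ContDiffAt ℝ 2 f q) (j : Fin m) :
    HasFDerivAt (wdq f j) ((2⁻¹ : ℂ) • ((fderiv ℝ (fderiv ℝ f) q).flip (Pi.single j 1)
      - I • (fderiv ℝ (fderiv ℝ f) q).flip (Pi.single j I))) q :=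
  (((hasFDerivAt_fderiv_apply hf _).sub ((hasFDerivAt_fderiv_apply hf _).const_mul I)).const_mul
    (2⁻¹ : ℂ)).congr_of_eventuallyEq (.of_forall fun _ => div_eq_inv_mul _ _)

theorem fderiv_wdq_apply (hf : ContDiffAt ℝ 2 f q) (j : Fin m) (v : Fin m → ℂ) :
    fderiv ℝ (wdq f j) q v = (fderiv ℝ (fderiv ℝ f) q v (Pi.single j 1)
      - I * fderiv ℝ (fderiv ℝ f) q v (Pi.single j I)) / 2 := by
  rw [(hasFDerivAt_wdq hf j).fderiv]
  simp only [_root_.smul_apply, _root_.sub_apply, ContinuousLinearMap.flip_apply, smul_eq_mul]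
  ring

theorem fderiv_wdqbar_apply (hf : ContDiffAt ℝ 2 f q) (j : Fin m) (v : Fin m → ℂ) :
    fderiv ℝ (wdqbar f j) q v = (fderiv ℝ (fderiv ℝ f) q v (Pi.single j 1)
      + I * fderiv ℝ (fderiv ℝ f) q v (Pi.single j I)) / 2 := by
  have h := ((hasFDerivAt_fderiv_apply hf (Pi.single j 1)).add
    ((hasFDerivAt_fderiv_apply hf (Pi.single j I)).const_mul I)).const_mul (2⁻¹ : ℂ)
  rw [(h.congr_of_eventuallyEq (f₁ := wdqbar f j) (.of_forall fun _ => div_eq_inv_mul _ _)).fderiv]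
  simp only [_root_.smul_apply, _root_.add_apply, ContinuousLinearMap.flip_apply, smul_eq_mul]
  ring

theorem wdq_wdq_comm (hf : ContDiffAt ℝ 2 f q) (i j : Fin m) :
    wdq (wdq f j) i q = wdq (wdq f i) j q := by
  have hD := hf.isSymmSndFDerivAt (by simp)
  simp only [wdq, pdRe, pdIm, fderiv_wdq_apply hf]
  linear_combination hD (Pi.single i 1) (Pi.single j 1) / 4
    - I / 4 * hD (Pi.single i 1) (Pi.single j I) - I / 4 * hD (Pi.single i I) (Pi.single j 1)
    + I ^ 2 / 4 * hD (Pi.single i I) (Pi.single j I)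

theorem quarter_mul_lap (hf : ContDiffAt ℝ 2 f q) :
    (1 / 4 : ℂ) * lap f q = ∑ i, wdq (wdqbar f i) i q := by
  have hD := hf.isSymmSndFDerivAt (by simp)
  simp only [lap, wdq, pdRe, pdIm, Finset.mul_sum, fderiv_wdqbar_apply hf,
    (hasFDerivAt_fderiv_apply hf _).fderiv, ContinuousLinearMap.flip_apply]
  refine Finset.sum_congr rfl fun i _ => ?_
  linear_combination I / 4 * hD (Pi.single i I) (Pi.single i 1)
    + fderiv ℝ (fderiv ℝ f) q (Pi.single i I) (Pi.single i I) / 4 * I_sq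

theorem quarter_mul_lap_of_wdqbar_eq {N : (Fin m → ℂ) → Matrix (Fin m) (Fin m) ℂ}
    (hf : ContDiffAt ℝ 2 f q) (hN : ∀ i j, DifferentiableAt ℝ (fun x => N x i j) q)
    (hskew : (N q)ᵀ = -N q)
    (hbar : ∀ i, wdqbar f i =ᶠ[𝓝 q] fun x => -∑ j, N x j i * wdq f j x) :
    (1 / 4 : ℂ) * lap f q = -∑ i, ∑ j, wdq (fun x => N x j i) i q * wdq f j q := by
  have hwd : ∀ j, DifferentiableAt ℝ (wdq f j) q :=
    fun j => (hasFDerivAt_wdq hf j).differentiableAt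
  have hsecond : ∑ i, ∑ j, N q j i * wdq (wdq f j) i q = 0 := by
    have hsymm : (Matrix.of fun i j => wdq (wdq f j) i q)ᵀ = .of fun i j => wdq (wdq f j) i q :=
      Matrix.ext fun i j => wdq_wdq_comm hf j i
    rw [Finset.sum_comm]
    exact (N q).trace_mul_eq_zero_of_transpose_eq_neg hskew hsymm
  calc (1 / 4 : ℂ) * lap f q = ∑ i, wdq (wdqbar f i) i q := quarter_mul_lap hf
    _ = -∑ i, ∑ j, (wdq (fun x => N x j i) i q * wdq f j q + N q j i * wdq (wdq f j) i q) := by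
        rw [← Finset.sum_neg_distrib]
        refine Finset.sum_congr rfl fun i _ => ?_
        rw [(hbar i).wdq_eq_s4, wdq_neg,
          wdq_sum (F := fun j x => N x j i * wdq f j x) fun j _ => (hN j i).mul (hwd j)]
        exact congrArg _ (Finset.sum_congr rfl fun j _ => wdq_mul (hN j i) (hwd j) i)
    _ = _ := by simp only [Finset.sum_add_distrib, hsecond, add_zero]

end Wirtinger

/-- Laplacian of a holomorphic map when the Hermitian structure is
constant along the fibres: if `z : U → V ⊆ ℂ^k` is `(M∘z)`-holomorphic with
`M : V → so(m,ℂ)` holomorphic, then with `A^a_i = ∂z^a/∂q^i`,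
`(1/4)Δz^a = − Σ_{i,j,b} A^a_i A^b_j (∂M^i_{j̄}/∂z^b)(z(q))`. -/
theorem laplacian_constant_along_fibres {m k : ℕ}
    (U : Set (Fin m → ℂ)) (hU : IsOpen U)
    (V : Set (Fin k → ℂ)) (hV : IsOpen V)
    (M : (Fin k → ℂ) → Matrix (Fin m) (Fin m) ℂ)
    (hskew : ∀ v ∈ V, (M v)ᵀ = -(M v))
    (hM : ∀ i j, DifferentiableOn ℂ (fun w => M w i j) V)
    (z : (Fin m → ℂ) → Fin k → ℂ) (hz : ContDiffOn ℝ (⊤ : ℕ∞) z U)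
    (hzV : Set.MapsTo z U V)
    (hhol : ∀ q ∈ U, ∀ i, ∀ a,
      wdqbar (fun x => z x a) i q + ∑ j, M (z q) j i * wdq (fun x => z x a) j q = 0) :
    ∀ q ∈ U, ∀ a, (1/4 : ℂ) * lap (fun x => z x a) q
      = - ∑ i, ∑ j, ∑ b, wdq (fun x => z x a) i q * wdq (fun x => z x b) j q *
          fderiv ℂ (fun w => M w i j) (z q) (Pi.single b 1) := by
  intro q hq a
  have hz2 : ContDiffAt ℝ 2 z q :=
    (hz.contDiffAt (hU.mem_nhds hq)).of_le (WithTop.coe_le_coe.mpr le_top)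
  have hzd : DifferentiableAt ℝ z q := hz2.differentiableAt two_ne_zero
  have hMz : ∀ i j, DifferentiableAt ℂ (fun w => M w i j) (z q) :=
    fun i j => (hM i j).differentiableAt (hV.mem_nhds (hzV hq))
  have hbar : ∀ i, wdqbar (fun x => z x a) i =ᶠ[𝓝 q]
      fun x => -∑ j, M (z x) j i * wdq (fun y => z y a) j x := fun i => by
    filter_upwards [hU.mem_nhds hq] with x hx
    exact eq_neg_of_add_eq_zero_left (hhol x hx i a)
  rw [quarter_mul_lap_of_wdqbar_eq (N := fun x => M (z x)) (contDiffAt_pi.1 hz2 a)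
    (fun i j => (hMz i j).restrictScalars ℝ |>.comp q hzd) (hskew _ (hzV hq)) hbar]
  have hchain : ∀ i j, wdq (fun x => M (z x) j i) i q
      = ∑ b, wdq (fun x => z x b) i q * fderiv ℂ (fun w => M w j i) (z q) (Pi.single b 1) :=
    fun i j => wdq_comp (hMz j i) hzd i
  rw [Finset.sum_comm]
  refine congrArg _ (Finset.sum_congr rfl fun i _ => Finset.sum_congr rfl fun j _ => ?_)
  rw [hchain, Finset.sum_mul]
  exact Finset.sum_congr rfl fun b _ => by ring
end

section
/- (Sylvester-type identity for complementary minors.) Let K be a k×k complex matrix with k ≥ 4. For 1 ≤ a < b ≤ k let E_{ab} denote the determinant of the (k−2)×(k−2) matrix obtained from K by deleting rows 1 and 2 and columns a and b. Then for all r, s with 3 ≤ r < s ≤ k: E_{1r}·E_{2s} − E_{1s}·E_{2r} = E_{12}·E_{rs}. -/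
open Complex BigOperators Matrix

/-- The strictly increasing enumeration `Fin (k-2) → Fin k` of the complement of
`{i, j}` (junk value if `i = j`). -/
noncomputable def delTwo {k : ℕ} (i j : Fin k) : Fin (k - 2) → Fin k :=
  if h : ({i, j}ᶜ : Finset (Fin k)).card = k - 2 then
    fun r => (({i, j}ᶜ : Finset (Fin k)).orderIsoOfFin h r : Fin k)
  else fun r => ⟨r.val, lt_of_lt_of_le r.isLt (Nat.sub_le k 2)⟩

/-! Let `N` be the matrix of the last `k - 2` rows of `K` and
`ω x y = det [x; y; N]` (`detPrepend`). Expanding along the two prepended rows,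
`E_{ab} = ± ω (e_a, e_b)`, so the identity is the three-term Plücker relation for the
alternating form `ω`. That relation comes from Cramer's rule: `det [z; w; N] • x` is a
combination of the rows `z, w, N`, and applying `ω y` kills the rows of `N`. -/

section

variable {R : Type*} [CommRing R] {m : ℕ}

namespace Matrix

theorem det_smul_eq_sum_det_updateRow_smul {n : Type*} [Fintype n] [DecidableEq n]
    (A : Matrix n n R) (u : n → R) : A.det • u = ∑ i, (A.updateRow i u).det • A i := by
  have h := mulVec_cramer Aᵀ u
  rw [det_transpose] at h
  rw [← h]
  ext j
  simp [mulVec, dotProduct, cramer_transpose_apply, Finset.sum_apply, mul_comm]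

theorem det_vecCons_single {n : ℕ} (a : Fin (n + 1)) (M : Fin n → Fin (n + 1) → R) :
    (of (vecCons (Pi.single a 1) M)).det =
      (-1) ^ (a : ℕ) * (of fun i j => M i (a.succAbove j)).det := by
  rw [det_succ_row_zero, Finset.sum_eq_single a]
  · simp only [of_apply, cons_val_zero, Pi.single_eq_same, mul_one]
    rfl
  · intro j _ hj
    simp [hj]
  · simp

def detPrepend (v : Fin m → Fin (m + 2) → R) (x y : Fin (m + 2) → R) : R :=
  detRowAlternating (vecCons x (vecCons y v))

variable (v : Fin m → Fin (m + 2) → R)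

theorem detPrepend_swap (x y : Fin (m + 2) → R) : detPrepend v y x = -detPrepend v x y := by
  have h : vecCons y (vecCons x v) = vecCons x (vecCons y v) ∘ Equiv.swap 0 1 := by
    ext i : 1
    refine Fin.cases ?_ (Fin.cases ?_ fun j => ?_) i
    · simp
    · simp
    · rw [Function.comp_apply, Equiv.swap_apply_of_ne_of_ne (Fin.succ_ne_zero _)
        (by simp [Fin.ext_iff])]
      rfl
  rw [detPrepend, detPrepend, h, AlternatingMap.map_swap _ _ zero_ne_one]

theorem detPrepend_apply_self (x : Fin (m + 2) → R) (j : Fin m) : detPrepend v x (v j) = 0 :=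
  AlternatingMap.map_eq_zero_of_eq _ _ (i := 1) (j := j.succ.succ) rfl (by simp [Fin.ext_iff])

def detPrependLinear (x : Fin (m + 2) → R) : (Fin (m + 2) → R) →ₗ[R] R :=
  (detRowAlternating : (Fin (m + 2) → R) [⋀^Fin (m + 2)]→ₗ[R] R).toMultilinearMap
    |>.toLinearMap (vecCons x (vecCons 0 v)) 1

theorem detPrependLinear_apply (x y : Fin (m + 2) → R) :
    detPrependLinear v x y = detPrepend v x y := by
  rw [detPrependLinear, MultilinearMap.toLinearMap_apply, ← Fin.succ_zero_eq_one, vecCons,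
    vecCons, ← Fin.cons_update, Fin.update_cons_zero]
  rfl

theorem detPrepend_plucker (x y z w : Fin (m + 2) → R) :
    detPrepend v x z * detPrepend v y w - detPrepend v x w * detPrepend v y z =
      detPrepend v x y * detPrepend v z w := by
  set A := of (vecCons z (vecCons w v))
  have hA0 : (A.updateRow 0 x).det = detPrepend v x w := by
    refine congrArg det (?_ : _ = of (vecCons x (vecCons w v)))
    ext i j
    refine Fin.cases ?_ (fun i => ?_) i <;> simp [A, updateRow_apply]
  have hA1 : (A.updateRow 1 x).det = detPrepend v z x := by
    refine congrArg det (?_ : _ = of (vecCons z (vecCons x v)))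
    ext i j
    refine Fin.cases ?_ (Fin.cases ?_ fun i => ?_) i <;> simp [A, updateRow_apply, Fin.ext_iff]
  have hv : ∑ i : Fin m, detPrependLinear v y ((A.updateRow i.succ.succ x).det • A i.succ.succ)
      = 0 :=
    Finset.sum_eq_zero fun i _ => by
      rw [map_smul, detPrependLinear_apply, show A i.succ.succ = v i from rfl,
        detPrepend_apply_self, smul_zero]
  have h := congrArg (detPrependLinear v y) (det_smul_eq_sum_det_updateRow_smul A x)
  rw [map_sum, Fin.sum_univ_succ, Fin.sum_univ_succ, hv, Fin.succ_zero_eq_one] at h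
  simp only [map_smul, detPrependLinear_apply, hA0, hA1, smul_eq_mul] at h
  rw [show A.det = detPrepend v z w from rfl, show A 0 = z from rfl, show A 1 = w from rfl,
    detPrepend_swap v x y, detPrepend_swap v x z] at h
  linear_combination h

theorem detPrepend_single_single_succAbove (a : Fin (m + 2)) (c : Fin (m + 1)) :
    detPrepend v (Pi.single a 1) (Pi.single (a.succAbove c) 1) =
      (-1) ^ ((a : ℕ) + c) * (of fun i j => v i (a.succAbove (c.succAbove j))).det := by
  change (of (vecCons (Pi.single a 1) (vecCons (Pi.single (a.succAbove c) 1) v))).det = _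
  have h : (of fun i j => vecCons (Pi.single (a.succAbove c) 1) v i (a.succAbove j)) =
      of (vecCons (Pi.single c 1) fun i j => v i (a.succAbove j)) := by
    ext i j
    refine Fin.cases ?_ (fun i => ?_) i
    · simp [Pi.single_apply]
    · rfl
  rw [det_vecCons_single, h, det_vecCons_single, pow_add, mul_assoc]

end Matrix

theorem delTwo_of_lt {a b : Fin (m + 2)} (hab : a < b) :
    delTwo a b = a.succAbove ∘ (b.pred (Fin.ne_zero_of_lt hab)).succAbove := by
  have hcard : ({a, b}ᶜ : Finset (Fin (m + 2))).card = m + 2 - 2 := by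
    rw [Finset.card_compl, Finset.card_pair hab.ne, Fintype.card_fin]
  have hb := Fin.succAbove_pred_of_lt a b hab
  rw [delTwo, dif_pos hcard]
  funext i
  rw [Finset.coe_orderIsoOfFin_apply]
  refine (congrFun (Finset.orderEmbOfFin_unique hcard (fun j => ?_)
    ((Fin.strictMono_succAbove a).comp (Fin.strictMono_succAbove _))) i).symm
  simp only [Finset.mem_compl, Finset.mem_insert, Finset.mem_singleton, not_or,
    Function.comp_apply]
  refine ⟨Fin.succAbove_ne _ _, fun h => ?_⟩
  conv_rhs at h => rw [← hb]
  exact Fin.succAbove_ne _ _ (Fin.succAbove_right_injective h)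

-- `Fin (m + 2 - 2)` and `Fin m` are definitionally equal, so `ρ` may be applied to `i : Fin m`.
theorem det_submatrix_delTwo {ι : Type*} (K : Matrix ι (Fin (m + 2)) R)
    (ρ : Fin (m + 2 - 2) → ι) {a b : Fin (m + 2)} (hab : a < b) :
    (K.submatrix ρ (delTwo a b)).det =
      (-1) ^ ((a : ℕ) + b + 1) *
        detPrepend (fun i => K (ρ i)) (Pi.single a 1) (Pi.single b 1) := by
  have h := detPrepend_single_single_succAbove (fun i => K (ρ i)) a
    (b.pred (Fin.ne_zero_of_lt hab))
  have hb : (b : ℕ) = (b.pred (Fin.ne_zero_of_lt hab) : ℕ) + 1 := by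
    rw [Fin.val_pred]
    have := Fin.pos_iff_ne_zero.2 (Fin.ne_zero_of_lt hab)
    omega
  rw [Fin.succAbove_pred_of_lt a b hab] at h
  rw [h, ← mul_assoc, ← pow_add, Even.neg_one_pow ⟨a + b, by omega⟩, one_mul,
    delTwo_of_lt hab]
  rfl

end

/-- Sylvester-type identity for complementary minors: let `K` be a
`k×k` complex matrix, `k ≥ 4`, and for `a < b` let `E a b` be the determinant of
the matrix obtained from `K` by deleting the first two rows and columns `a, b`.
Then for `r < s` both beyond the first two columns,
`E_{1r}·E_{2s} − E_{1s}·E_{2r} = E_{12}·E_{rs}` (here with 0-based indices: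
`E_{0r}E_{1s} − E_{0s}E_{1r} = E_{01}E_{rs}`). -/
theorem sylvester_minor_identity {k : ℕ} (hk : 4 ≤ k)
    (K : Matrix (Fin k) (Fin k) ℂ) (r s : Fin k)
    (hr : 2 ≤ (r : ℕ)) (hrs : r < s) :
    (K.submatrix (delTwo (⟨0, by omega⟩ : Fin k) ⟨1, by omega⟩) (delTwo ⟨0, by omega⟩ r)).det *
      (K.submatrix (delTwo (⟨0, by omega⟩ : Fin k) ⟨1, by omega⟩) (delTwo ⟨1, by omega⟩ s)).det -
    (K.submatrix (delTwo (⟨0, by omega⟩ : Fin k) ⟨1, by omega⟩) (delTwo ⟨0, by omega⟩ s)).det *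
      (K.submatrix (delTwo (⟨0, by omega⟩ : Fin k) ⟨1, by omega⟩) (delTwo ⟨1, by omega⟩ r)).det
    = (K.submatrix (delTwo (⟨0, by omega⟩ : Fin k) ⟨1, by omega⟩)
        (delTwo (⟨0, by omega⟩ : Fin k) ⟨1, by omega⟩)).det *
      (K.submatrix (delTwo (⟨0, by omega⟩ : Fin k) ⟨1, by omega⟩) (delTwo r s)).det := by
  obtain ⟨m, rfl⟩ : ∃ m, k = m + 2 := ⟨k - 2, by omega⟩
  set e₀ : Fin (m + 2) := ⟨0, by omega⟩
  set e₁ : Fin (m + 2) := ⟨1, by omega⟩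
  have h₀₁ : e₀ < e₁ := Fin.mk_lt_mk.2 Nat.zero_lt_one
  have h₀r : e₀ < r := Fin.lt_def.2 (show 0 < (r : ℕ) by omega)
  have h₁r : e₁ < r := Fin.lt_def.2 (show 1 < (r : ℕ) by omega)
  rw [det_submatrix_delTwo _ _ h₀r, det_submatrix_delTwo _ _ (h₁r.trans hrs),
    det_submatrix_delTwo _ _ (h₀r.trans hrs), det_submatrix_delTwo _ _ h₁r,
    det_submatrix_delTwo _ _ h₀₁, det_submatrix_delTwo _ _ hrs]
  -- each of the three products carries the same sign `(-1) ^ (e₀ + e₁ + r + s + 2)`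
  linear_combination (-1 : ℂ) ^ ((e₀ : ℕ) + e₁ + r + s) *
    detPrepend_plucker (fun i => K (delTwo e₀ e₁ i))
      (Pi.single e₀ 1) (Pi.single e₁ 1) (Pi.single r 1) (Pi.single s 1)
end

section
/- (Global examples in even dimensions.) For every m ≥ 3 there exists a smooth map φ : ℝ^{2m} ≅ ℂ^m → ℂ, defined on all of ℝ^{2m}, such that: (1) Δφ = 0 everywhere; (2) Σ_{i=1}^{2m} (∂φ/∂x^i)² = 0 everywhere (so φ is a harmonic morphism); (3) φ is a submersion; (4) φ is full, i.e. for every nonzero v ∈ ℝ^{2m} the directional derivative ∂_v φ does not vanish identically; (5) there exists a smooth map M : ℂ^m → so(m,ℂ) (skew-symmetric complex m×m matrices) such that φ is M-holomorphic, i.e. ∂φ/∂q̄^i + Σ_j M^j_{ī} ∂φ/∂q^j = 0 for each i; and (6) φ is not holomorphic with respect to any Kähler structure: there is no linear isometry J : ℝ^{2m} → ℝ^{2m} with J² = −Id such that dφ_x(Jv) = i·dφ_x(v) for all x and v. -/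
open Complex BigOperators Matrix

/-!
Take `φ(q) = q¹ + q⁰q² + (q⁰)³ q̄¹ − (q⁰)² q̄² + Σ_{k ≥ 3} (qᵏ)²` (coordinates numbered from `0`).
In Wirtinger derivatives, `Σᵢ (∂φ/∂xⁱ)² = 4 Σⱼ ∂ⱼφ ∂̄ⱼφ` and `Δφ = 2 Σⱼ (∂̄ⱼ∂ⱼφ + ∂ⱼ∂̄ⱼφ)`.
The only nonzero `∂̄ⱼφ` are `∂̄₁φ = (q⁰)³` and `∂̄₂φ = −(q⁰)²`, against `∂₁φ = 1`, `∂₂φ = q⁰`; so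
`Σ ∂ⱼφ ∂̄ⱼφ = 0`, and `M = (q⁰)² (E₁₂ − E₂₁)` makes `φ` `M`-holomorphic. Each `∂ⱼφ` is holomorphic
in `qʲ` and each `∂̄ⱼφ` is independent of `qʲ`, so `Δφ = 0`. A constant `J` with
`dφ ∘ J = i dφ` would give `w = J e₁` with `w₁ = i` (look at `q = 0`) and `w₂ + w̄₂ = 2i`
(look at `q = −e₀`), which is impossible. Surjectivity holds because along
`z ↦ z e₁ − (q⁰)² z̄ e₂` the differential is multiplication by `1 + |q⁰|⁴`.
-/

open Function ComplexConjugate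

section Wirtinger

variable {m : ℕ} (f : (Fin m → ℂ) → ℂ) (j : Fin m) (x : Fin m → ℂ)

theorem pdRe_eq_wdq_add_wdqbar : pdRe f j x = wdq f j x + wdqbar f j x := by
  simp only [wdq, wdqbar]; ring

theorem pdIm_eq_I_mul_wdq_sub_wdqbar : pdIm f j x = I * (wdq f j x - wdqbar f j x) := by
  simp only [wdq, wdqbar]; linear_combination pdIm f j x * I_sq

theorem hwc_eq_four_mul_sum_wdq_mul_wdqbar : hwc f x = 4 * ∑ j, wdq f j x * wdqbar f j x := by
  simp only [hwc, pdRe_eq_wdq_add_wdqbar, pdIm_eq_I_mul_wdq_sub_wdqbar, Finset.mul_sum]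
  refine Finset.sum_congr rfl fun k _ => ?_
  linear_combination (wdq f k x - wdqbar f k x) ^ 2 * I_sq

theorem fderiv_apply_single (c : ℂ) :
    fderiv ℝ f x (Pi.single j c) = wdq f j x * c + wdqbar f j x * conj c := by
  have hc : (Pi.single j c : Fin m → ℂ)
      = c.re • (Pi.single j 1 : Fin m → ℂ) + c.im • (Pi.single j I : Fin m → ℂ) := by
    rw [← Pi.single_smul, ← Pi.single_smul, ← Pi.single_add, real_smul, real_smul, mul_one,
      re_add_im]
  rw [hc, map_add, map_smul, map_smul, ← pdRe, ← pdIm, pdRe_eq_wdq_add_wdqbar,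
    pdIm_eq_I_mul_wdq_sub_wdqbar, real_smul, real_smul]
  conv_rhs => rw [← re_add_im c]
  simp only [map_add, map_mul, conj_ofReal, conj_I]
  ring

variable {f j x}

theorem wdq_eq_and_wdqbar_eq_of_fderiv_eq {a b : Fin m → ℂ}
    (h : ∀ v, fderiv ℝ f x v = ∑ k, (a k * v k + b k * conj (v k))) :
    wdq f j x = a j ∧ wdqbar f j x = b j := by
  have hc : ∀ c, wdq f j x * c + wdqbar f j x * conj c = a j * c + b j * conj c := fun c => by
    rw [← fderiv_apply_single, h, Finset.sum_eq_single j (fun k _ hk => by simp [hk]) (by simp)]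
    simp
  have h1 := hc 1
  have hI := hc I
  simp only [mul_one, map_one, conj_I] at h1 hI
  constructor
  · linear_combination (h1 - I * hI) / 2 + (wdq f j x - a j + b j - wdqbar f j x) / 2 * I_sq
  · linear_combination (h1 + I * hI) / 2 + (wdqbar f j x + a j - b j - wdq f j x) / 2 * I_sq

theorem fderiv_apply_single_eq_fderiv_update (hf : DifferentiableAt ℝ f x) (c : ℂ) :
    fderiv ℝ f x (Pi.single j c) = fderiv ℝ (fun z => f (update x j z)) (x j) c := by
  have hf' : HasFDerivAt f (fderiv ℝ f x) (update x j (x j)) := by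
    rw [update_eq_self]; exact hf.hasFDerivAt
  rw [show (fun z => f (update x j z)) = f ∘ update x j from rfl,
    (hf'.comp (x j) (hasFDerivAt_update (𝕜 := ℝ) x (x j))).fderiv,
    ContinuousLinearMap.comp_apply]
  congr 1
  ext k
  by_cases hk : k = j <;> simp [hk]

theorem wdqbar_eq_zero_of_differentiableAt_update (hf : DifferentiableAt ℝ f x)
    (h : DifferentiableAt ℂ (fun z => f (update x j z)) (x j)) : wdqbar f j x = 0 := by
  have hI : fderiv ℂ (fun z => f (update x j z)) (x j) I
      = I * fderiv ℂ (fun z => f (update x j z)) (x j) 1 := by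
    rw [← smul_eq_mul I, ← map_smul, smul_eq_mul, mul_one]
  simp only [wdqbar, pdRe, pdIm, fderiv_apply_single_eq_fderiv_update hf,
    h.fderiv_restrictScalars ℝ, ContinuousLinearMap.coe_restrictScalars', hI]
  linear_combination fderiv ℂ (fun z => f (update x j z)) (x j) 1 / 2 * I_sq

theorem wdq_eq_zero_of_update_eq (hf : DifferentiableAt ℝ f x)
    (h : ∀ z, f (update x j z) = f x) : wdq f j x = 0 := by
  simp only [wdq, pdRe, pdIm, fderiv_apply_single_eq_fderiv_update hf, h, fderiv_const_apply,
    _root_.zero_apply]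
  ring

theorem lap_eq_two_mul_sum (hq : ∀ j, DifferentiableAt ℝ (wdq f j) x)
    (hqbar : ∀ j, DifferentiableAt ℝ (wdqbar f j) x) :
    lap f x = 2 * ∑ j, (wdqbar (wdq f j) j x + wdq (wdqbar f j) j x) := by
  have hRe : ∀ j, (fun y => pdRe f j y) = fun y => wdq f j y + wdqbar f j y :=
    fun j => funext (pdRe_eq_wdq_add_wdqbar f j)
  have hIm : ∀ j, (fun y => pdIm f j y) = fun y => I * (wdq f j y - wdqbar f j y) :=
    fun j => funext (pdIm_eq_I_mul_wdq_sub_wdqbar f j)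
  simp only [lap, hRe, hIm, Finset.mul_sum]
  refine Finset.sum_congr rfl fun k _ => ?_
  simp only [pdRe, pdIm, fderiv_fun_add (hq k) (hqbar k),
    fderiv_const_mul ((hq k).fun_sub (hqbar k)), fderiv_fun_sub (hq k) (hqbar k)]
  simp only [wdq, wdqbar, pdRe, pdIm, _root_.add_apply, _root_.smul_apply, _root_.sub_apply,
    smul_eq_mul]
  ring

end Wirtinger

theorem hasFDerivAt_conj_apply {ι : Type*} [Fintype ι] (q : ι → ℂ) (i : ι) :
    HasFDerivAt (fun y : ι → ℂ => conj (y i))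
      (conjCLE.toContinuousLinearMap.comp (ContinuousLinearMap.proj i)) q :=
  conjCLE.toContinuousLinearMap.hasFDerivAt.comp q (hasFDerivAt_apply i q)

@[fun_prop]
theorem ContDiff.conj {E : Type*} [NormedAddCommGroup E] [NormedSpace ℝ E] {f : E → ℂ}
    {k : WithTop ℕ∞} (hf : ContDiff ℝ k f) : ContDiff ℝ k fun x => conj (f x) :=
  conjCLE.contDiff.comp hf

namespace GlobalEven

variable {n : ℕ}

-- `simp` cannot decide these for a variable `n`; both orientations are needed to discharge the
-- side conditions of `update_of_ne` and `Pi.single_eq_of_ne`.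
@[simp]
theorem two_ne_zero_and_two_ne_one :
    (2 : Fin (n + 3)) ≠ 0 ∧ (0 : Fin (n + 3)) ≠ 2 ∧
      (2 : Fin (n + 3)) ≠ 1 ∧ (1 : Fin (n + 3)) ≠ 2 := by
  simp only [ne_eq, Fin.ext_iff, Fin.val_two, Fin.val_zero, Fin.val_one]; omega

@[simp]
theorem succ_succ_succ_ne_one_and_ne_two (i : Fin n) :
    i.succ.succ.succ ≠ 1 ∧ 1 ≠ i.succ.succ.succ ∧
      i.succ.succ.succ ≠ 2 ∧ 2 ≠ i.succ.succ.succ := by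
  simp only [ne_eq, Fin.ext_iff, Fin.val_two, Fin.val_one, Fin.val_succ]; omega

def phi (q : Fin (n + 3) → ℂ) : ℂ :=
  q 1 + q 0 * q 2 + q 0 ^ 3 * conj (q 1) - q 0 ^ 2 * conj (q 2)
    + ∑ i : Fin n, q i.succ.succ.succ ^ 2

def wdqPhi (q : Fin (n + 3) → ℂ) : Fin (n + 3) → ℂ :=
  vecCons (q 2 + 3 * q 0 ^ 2 * conj (q 1) - 2 * q 0 * conj (q 2))
    (vecCons 1 (vecCons (q 0) fun i => 2 * q i.succ.succ.succ))

def wdqbarPhi (q : Fin (n + 3) → ℂ) : Fin (n + 3) → ℂ :=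
  vecCons 0 (vecCons (q 0 ^ 3) (vecCons (-q 0 ^ 2) 0))

theorem contDiff_phi : ContDiff ℝ (⊤ : ℕ∞) (phi (n := n)) := by
  unfold phi; fun_prop

theorem fderiv_phi_apply (q v : Fin (n + 3) → ℂ) :
    fderiv ℝ phi q v = v 1 + q 0 * v 2 + q 0 ^ 3 * conj (v 1) - q 0 ^ 2 * conj (v 2)
      + (q 2 + 3 * q 0 ^ 2 * conj (q 1) - 2 * q 0 * conj (q 2)) * v 0
      + ∑ i : Fin n, 2 * q i.succ.succ.succ * v i.succ.succ.succ := by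
  have hc := fun i => hasFDerivAt_apply (𝕜 := ℝ) (F' := fun _ => ℂ) i q
  have hcc := hasFDerivAt_conj_apply q
  have h : HasFDerivAt phi _ q :=
    ((((hc 1).add ((hc 0).mul (hc 2))).add (((hc 0).pow 3).mul (hcc 1))).sub
      (((hc 0).pow 2).mul (hcc 2))).add
      (HasFDerivAt.fun_sum (u := Finset.univ) fun i _ => (hc i.succ.succ.succ).pow 2)
  rw [h.fderiv]
  simp only [Nat.add_one_sub_one, nsmul_eq_mul, Nat.cast_ofNat, pow_one, _root_.add_apply,
    _root_.sub_apply, ContinuousLinearMap.proj_apply, _root_.smul_apply, smul_eq_mul,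
    ContinuousLinearMap.comp_apply, ContinuousLinearEquiv.coe_coe,
    ContinuousAlgEquiv.coeCLE_apply, conjCAE_apply, _root_.sum_apply, add_left_inj]
  ring

theorem fderiv_phi_eq_sum (q v : Fin (n + 3) → ℂ) :
    fderiv ℝ phi q v = ∑ j, (wdqPhi q j * v j + wdqbarPhi q j * conj (v j)) := by
  simp only [fderiv_phi_apply, wdqPhi, wdqbarPhi, Fin.sum_univ_succ, cons_val_zero, zero_mul,
    add_zero, cons_val_succ, Fin.succ_zero_eq_one, one_mul, Fin.succ_one_eq_two, neg_mul,
    Pi.zero_apply]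
  ring

theorem wdq_phi (j : Fin (n + 3)) : wdq phi j = fun q => wdqPhi q j :=
  funext fun q => (wdq_eq_and_wdqbar_eq_of_fderiv_eq (fderiv_phi_eq_sum q)).1

theorem wdqbar_phi (j : Fin (n + 3)) : wdqbar phi j = fun q => wdqbarPhi q j :=
  funext fun q => (wdq_eq_and_wdqbar_eq_of_fderiv_eq (fderiv_phi_eq_sum q)).2

theorem hwc_phi (q : Fin (n + 3) → ℂ) : hwc phi q = 0 := by
  rw [hwc_eq_four_mul_sum_wdq_mul_wdqbar]
  simp only [wdq_phi, wdqbar_phi, Fin.sum_univ_succ, wdqPhi, wdqbarPhi, cons_val_zero,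
    cons_val_succ, Pi.zero_apply, mul_zero, Finset.sum_const_zero, add_zero, zero_add]
  ring

theorem differentiable_wdqPhi (j : Fin (n + 3)) : Differentiable ℝ fun q => wdqPhi q j := by
  refine Fin.cases ?_ (Fin.cases ?_ (Fin.cases ?_ fun i => ?_)) j <;>
    simp only [wdqPhi, cons_val_zero, cons_val_succ] <;> fun_prop

theorem differentiable_wdqbarPhi (j : Fin (n + 3)) : Differentiable ℝ fun q => wdqbarPhi q j := by
  refine Fin.cases ?_ (Fin.cases ?_ (Fin.cases ?_ fun i => ?_)) j <;>
    simp only [wdqbarPhi, cons_val_zero, cons_val_succ, Pi.zero_apply] <;> fun_prop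

theorem wdqbar_wdqPhi (q : Fin (n + 3) → ℂ) (j : Fin (n + 3)) :
    wdqbar (fun y => wdqPhi y j) j q = 0 := by
  refine wdqbar_eq_zero_of_differentiableAt_update (differentiable_wdqPhi j q) ?_
  refine Fin.cases ?_ (Fin.cases ?_ (Fin.cases ?_ fun i => ?_)) j <;>
    simp only [wdqPhi, Fin.succ_zero_eq_one, Fin.succ_one_eq_two, cons_val_zero, cons_val_one,
      cons_val, cons_val_succ, update_self, update_of_ne, ne_eq, not_false_eq_true,
      two_ne_zero_and_two_ne_one, succ_succ_succ_ne_one_and_ne_two, one_ne_zero, zero_ne_one,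
      Fin.succ_ne_zero] <;> fun_prop

theorem wdq_wdqbarPhi (q : Fin (n + 3) → ℂ) (j : Fin (n + 3)) :
    wdq (fun y => wdqbarPhi y j) j q = 0 := by
  refine wdq_eq_zero_of_update_eq (differentiable_wdqbarPhi j q) fun z => ?_
  refine Fin.cases ?_ (Fin.cases ?_ (Fin.cases ?_ fun i => ?_)) j <;> simp [wdqbarPhi]

theorem lap_phi (q : Fin (n + 3) → ℂ) : lap phi q = 0 := by
  rw [lap_eq_two_mul_sum (fun j => by rw [wdq_phi]; exact differentiable_wdqPhi j q)
    (fun j => by rw [wdqbar_phi]; exact differentiable_wdqbarPhi j q)]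
  simp [wdq_phi, wdqbar_phi, wdqbar_wdqPhi, wdq_wdqbarPhi]

def skewM (q : Fin (n + 3) → ℂ) : Matrix (Fin (n + 3)) (Fin (n + 3)) ℂ :=
  q 0 ^ 2 • (Matrix.single 1 2 1 - Matrix.single 2 1 1)

theorem contDiff_skewM_apply (i j : Fin (n + 3)) :
    ContDiff ℝ (⊤ : ℕ∞) fun q => skewM q i j := by
  simp only [skewM, Matrix.smul_apply, smul_eq_mul]; fun_prop

theorem transpose_skewM (q : Fin (n + 3) → ℂ) : (skewM q)ᵀ = -skewM q := by
  simp [skewM, Matrix.transpose_sub, Matrix.transpose_single, ← smul_neg]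

theorem sum_skewM_mul (q a : Fin (n + 3) → ℂ) (i : Fin (n + 3)) :
    ∑ j, skewM q j i * a j
      = q 0 ^ 2 * ((if i = 2 then a 1 else 0) - if i = 1 then a 2 else 0) := by
  simp only [skewM, Matrix.smul_apply, Matrix.sub_apply, Matrix.single_apply, smul_eq_mul,
    mul_assoc, ← Finset.mul_sum, sub_mul, Finset.sum_sub_distrib, ite_and, ite_mul, zero_mul,
    one_mul, Finset.sum_ite_eq, Finset.mem_univ, if_true, @eq_comm _ _ i]

theorem wdqbar_phi_add_sum_skewM_mul_wdq_phi (q : Fin (n + 3) → ℂ) (i : Fin (n + 3)) :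
    wdqbar phi i q + ∑ j, skewM q j i * wdq phi j q = 0 := by
  rw [sum_skewM_mul, wdq_phi, wdq_phi, wdqbar_phi]
  refine Fin.cases ?_ (Fin.cases ?_ (Fin.cases ?_ fun k => ?_)) i <;>
    simp [wdqPhi, wdqbarPhi, ← pow_succ]

theorem fderiv_phi_surjective (q : Fin (n + 3) → ℂ) :
    Function.Surjective (fderiv ℝ phi q) := by
  have hr : 1 + (q 0 * conj (q 0)) ^ 2 ≠ 0 := by
    rw [mul_conj, ← ofReal_pow, ← ofReal_one, ← ofReal_add]
    exact ofReal_ne_zero.mpr (by positivity)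
  set r := 1 + (q 0 * conj (q 0)) ^ 2
  have hline : ∀ z : ℂ,
      fderiv ℝ phi q (Pi.single 1 z + Pi.single 2 (-(q 0 ^ 2 * conj z)) : Fin (n + 3) → ℂ)
        = r * z := fun z => by
    simp only [fderiv_phi_apply, Pi.add_apply, Pi.single_eq_same, ne_eq,
      two_ne_zero_and_two_ne_one, not_false_eq_true, Pi.single_eq_of_ne, add_zero, zero_add,
      mul_neg, map_neg, map_mul, map_pow, RingHomCompTriple.comp_apply, RingHom.id_apply,
      sub_neg_eq_add, zero_ne_one, mul_zero, succ_succ_succ_ne_one_and_ne_two,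
      Finset.sum_const_zero]
    ring
  exact fun c => ⟨_, (hline (c / r)).trans (mul_div_cancel₀ c hr)⟩

theorem exists_fderiv_phi_ne_zero (v : Fin (n + 3) → ℂ) (hv : v ≠ 0) :
    ∃ q, fderiv ℝ phi q v ≠ 0 := by
  by_contra! h
  have h1 : v 1 = 0 := by simpa [fderiv_phi_apply] using h 0
  have h0 : v 0 = 0 := by simpa [fderiv_phi_apply, h1] using h (Pi.single 2 1)
  have hp : v 2 - conj (v 2) = 0 := by
    simpa [fderiv_phi_apply, h1, h0] using h (Pi.single 0 1)
  have hm : -v 2 - conj (v 2) = 0 := by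
    simpa [fderiv_phi_apply, h1, h0] using h (Pi.single 0 (-1))
  have h2 : v 2 = 0 := by linear_combination (hp - hm) / 2
  have htail : ∀ i : Fin n, v i.succ.succ.succ = 0 := fun i => by
    simpa [fderiv_phi_apply, h1, h0, h2, Pi.single_apply] using h (Pi.single i.succ.succ.succ 1)
  exact hv (funext fun j => Fin.cases h0 (Fin.cases h1 (Fin.cases h2 htail)) j)

theorem not_exists_fderiv_phi_eq_I_mul :
    ¬ ∃ w, ∀ q,
      fderiv ℝ phi q w = I * fderiv ℝ phi q (Pi.single 1 1 : Fin (n + 3) → ℂ) := by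
  rintro ⟨w, hw⟩
  have h0 : w 1 = I := by simpa [fderiv_phi_apply] using hw 0
  have h1 : I - w 2 + I - conj (w 2) = 0 := by
    simpa [fderiv_phi_apply, h0, Odd.neg_one_pow (⟨1, rfl⟩ : Odd 3), sub_eq_add_neg]
      using hw (Pi.single 0 (-1))
  have hre : ((2 * (w 2).re : ℝ) : ℂ) = 2 * I := by
    rw [← add_conj]; linear_combination -h1
  simpa using congrArg im hre

end GlobalEven

open GlobalEven in
/-- global examples in even dimensions: for every `m ≥ 3` there is
a smooth, globally defined `φ : ℝ^{2m} ≅ ℂ^m → ℂ` which is harmonic,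
horizontally weakly conformal (hence a harmonic morphism), submersive, full,
holomorphic with respect to some smooth almost Hermitian structure `J(M)`
(`M` smooth, skew-symmetric), but not holomorphic with respect to any Kähler
structure (constant orthogonal complex structure) on `ℝ^{2m}`. -/
theorem global_even_example {m : ℕ} (hm : 3 ≤ m) :
    ∃ φ : (Fin m → ℂ) → ℂ, ContDiff ℝ (⊤ : ℕ∞) φ
      ∧ (∀ q, lap φ q = 0)
      ∧ (∀ q, hwc φ q = 0)
      ∧ (∀ q, Function.Surjective (fderiv ℝ φ q))
      ∧ (∀ v : Fin m → ℂ, v ≠ 0 → ∃ q, fderiv ℝ φ q v ≠ 0)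
      ∧ (∃ M : (Fin m → ℂ) → Matrix (Fin m) (Fin m) ℂ,
           (∀ i j, ContDiff ℝ (⊤ : ℕ∞) (fun q => M q i j))
           ∧ (∀ q, (M q)ᵀ = -(M q))
           ∧ (∀ q, ∀ i, wdqbar φ i q + ∑ j, M q j i * wdq φ j q = 0))
      ∧ ¬ (∃ J : (Fin m → ℂ) →ₗ[ℝ] (Fin m → ℂ),
            (∀ v w : Fin m → ℂ,
              (∑ j, starRingEnd ℂ (J v j) * J w j).re
                = (∑ j, starRingEnd ℂ (v j) * w j).re)
            ∧ (∀ v, J (J v) = -v)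
            ∧ (∀ x v, fderiv ℝ φ x (J v) = Complex.I * fderiv ℝ φ x v)) := by
  obtain ⟨n, rfl⟩ := Nat.exists_eq_add_of_le' hm
  refine ⟨phi, contDiff_phi, lap_phi, hwc_phi, fderiv_phi_surjective, exists_fderiv_phi_ne_zero,
    ⟨skewM, contDiff_skewM_apply, transpose_skewM, wdqbar_phi_add_sum_skewM_mul_wdq_phi⟩, ?_⟩
  rintro ⟨J, -, -, hJ⟩
  exact not_exists_fderiv_phi_eq_I_mul ⟨J (Pi.single 1 1), fun q => hJ q _⟩
end

section
/- (Explicit rational harmonic morphism on ℝ⁶.) Let U = {q ∈ ℂ³ : (q̄¹)² + q̄¹q̄² + q̄³ ≠ 0} and define z¹ : U → ℂ by z¹(q) = (−q³(q̄¹ + q̄²) + q¹ − q²) / ((q̄¹)² + q̄¹q̄² + q̄³). Then Δz¹ = 0 and Σ_{i=1}^{6} (∂z¹/∂x^i)² = 0 at every point of U; i.e. z¹ is a harmonic morphism from U to ℂ. -/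
/-!
Write `z¹ = N / D` with `D` antiholomorphic and `N` affine in the holomorphic coordinates, so that
`∂z¹/∂q^j = a_j / D` where `a = ∂N/∂q = (1, -1, -(q̄¹ + q̄²))` is antiholomorphic and `a_j` does
not involve `q̄^j`. In Wirtinger derivatives `Δ = 4 Σ_j ∂²/∂q̄^j∂q^j` and
`Σ_i (∂z¹/∂x^i)² = 4 Σ_j ∂z¹/∂q^j · ∂z¹/∂q̄^j`, so `Δz¹ = -4 (a · ∂D/∂q̄) / D²` and
`Σ_i (∂z¹/∂x^i)² = 4 (D (a · ∂N/∂q̄) - N (a · ∂D/∂q̄)) / D³`; both pairings vanish identically.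
-/

open Complex BigOperators Matrix

/-- The rational map `z¹(q) = (−q³(q̄¹ + q̄²) + q¹ − q²)/((q̄¹)² + q̄¹q̄² + q̄³)`
on `ℂ³` (0-based indices). -/
noncomputable def zRational : (Fin 3 → ℂ) → ℂ :=
  fun q =>
    (-(q 2) * (starRingEnd ℂ (q 0) + starRingEnd ℂ (q 1)) + q 0 - q 1) /
      ((starRingEnd ℂ (q 0)) ^ 2 + starRingEnd ℂ (q 0) * starRingEnd ℂ (q 1)
        + starRingEnd ℂ (q 2))

open ComplexConjugate Filter Topology

section Wirtinger

variable {m : ℕ}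

noncomputable def wirtingerCLM (A B : Fin m → ℂ) : (Fin m → ℂ) →L[ℝ] ℂ :=
  ∑ j, (A j • ContinuousLinearMap.proj j +
    B j • conjCLE.toContinuousLinearMap.comp (ContinuousLinearMap.proj j))

@[simp] lemma wirtingerCLM_apply (A B v : Fin m → ℂ) :
    wirtingerCLM A B v = ∑ j, (A j * v j + B j * conj (v j)) := by
  simp [wirtingerCLM]

lemma wirtingerCLM_add (A B C E : Fin m → ℂ) :
    wirtingerCLM (A + C) (B + E) = wirtingerCLM A B + wirtingerCLM C E := by
  ext1 v
  simp only [wirtingerCLM_apply, _root_.add_apply, Pi.add_apply,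
    ← Finset.sum_add_distrib]
  exact Finset.sum_congr rfl fun _ _ => by ring

lemma wirtingerCLM_smul (c : ℂ) (A B : Fin m → ℂ) :
    wirtingerCLM (c • A) (c • B) = c • wirtingerCLM A B := by
  ext1 v
  simp only [wirtingerCLM_apply, _root_.smul_apply, Pi.smul_apply, smul_eq_mul,
    Finset.mul_sum]
  exact Finset.sum_congr rfl fun _ _ => by ring

lemma wirtingerCLM_neg (A B : Fin m → ℂ) :
    wirtingerCLM (-A) (-B) = -wirtingerCLM A B := by
  ext1 v
  simp only [wirtingerCLM_apply, _root_.neg_apply, Pi.neg_apply, ← Finset.sum_neg_distrib]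
  exact Finset.sum_congr rfl fun _ _ => by ring

lemma wirtingerCLM_zero : wirtingerCLM (0 : Fin m → ℂ) 0 = 0 := by
  ext1 v; simp

lemma wirtingerCLM_single_one (A B : Fin m → ℂ) (j : Fin m) :
    wirtingerCLM A B (Pi.single j 1) = A j + B j := by
  rw [wirtingerCLM_apply, Finset.sum_eq_single j (fun k _ hk => by simp [hk]) (by simp)]
  simp

lemma wirtingerCLM_single_I (A B : Fin m → ℂ) (j : Fin m) :
    wirtingerCLM A B (Pi.single j I) = I * (A j - B j) := by
  rw [wirtingerCLM_apply, Finset.sum_eq_single j (fun k _ hk => by simp [hk]) (by simp)]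
  simp; ring

/-- `A` and `B` are the Wirtinger gradients `∂f/∂q` and `∂f/∂q̄` at `x`: every real-linear map
`ℂᵐ → ℂ` is `v ↦ Σ_j (A_j v_j + B_j v̄_j)` for unique `A`, `B`. -/
def HasWirtingerDerivAt (f : (Fin m → ℂ) → ℂ) (A B : Fin m → ℂ) (x : Fin m → ℂ) : Prop :=
  HasFDerivAt f (wirtingerCLM A B) x

namespace HasWirtingerDerivAt

variable {f g : (Fin m → ℂ) → ℂ} {A B C E x : Fin m → ℂ}

lemma pdRe_eq (hf : HasWirtingerDerivAt f A B x) (j : Fin m) : pdRe f j x = A j + B j := by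
  rw [pdRe, hf.fderiv, wirtingerCLM_single_one]

lemma pdIm_eq (hf : HasWirtingerDerivAt f A B x) (j : Fin m) :
    pdIm f j x = I * (A j - B j) := by
  rw [pdIm, hf.fderiv, wirtingerCLM_single_I]

lemma wdq_eq (hf : HasWirtingerDerivAt f A B x) (j : Fin m) : wdq f j x = A j := by
  rw [wdq, hf.pdRe_eq, hf.pdIm_eq]; ring_nf; rw [I_sq]; ring

lemma wdqbar_eq (hf : HasWirtingerDerivAt f A B x) (j : Fin m) : wdqbar f j x = B j := by
  rw [wdqbar, hf.pdRe_eq, hf.pdIm_eq]; ring_nf; rw [I_sq]; ring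

lemma hwc_eq (hf : HasWirtingerDerivAt f A B x) : hwc f x = 4 * (A ⬝ᵥ B) := by
  simp only [hwc, hf.pdRe_eq, hf.pdIm_eq, dotProduct, Finset.mul_sum]
  refine Finset.sum_congr rfl fun _ _ => ?_
  ring_nf; rw [I_sq]; ring

lemma add (hf : HasWirtingerDerivAt f A B x) (hg : HasWirtingerDerivAt g C E x) :
    HasWirtingerDerivAt (fun y => f y + g y) (A + C) (B + E) x := by
  rw [HasWirtingerDerivAt, wirtingerCLM_add]
  exact HasFDerivAt.fun_add hf hg

lemma neg (hf : HasWirtingerDerivAt f A B x) :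
    HasWirtingerDerivAt (fun y => -f y) (-A) (-B) x := by
  rw [HasWirtingerDerivAt, wirtingerCLM_neg]
  exact hf.fun_neg

lemma sub (hf : HasWirtingerDerivAt f A B x) (hg : HasWirtingerDerivAt g C E x) :
    HasWirtingerDerivAt (fun y => f y - g y) (A - C) (B - E) x := by
  simpa only [sub_eq_add_neg] using hf.add hg.neg

lemma mul (hf : HasWirtingerDerivAt f A B x) (hg : HasWirtingerDerivAt g C E x) :
    HasWirtingerDerivAt (fun y => f y * g y) (f x • C + g x • A) (f x • E + g x • B) x := by
  rw [HasWirtingerDerivAt, wirtingerCLM_add, wirtingerCLM_smul, wirtingerCLM_smul]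
  exact HasFDerivAt.fun_mul hf hg

lemma inv (hf : HasWirtingerDerivAt f A B x) (hx : f x ≠ 0) :
    HasWirtingerDerivAt (fun y => (f y)⁻¹) (-(f x ^ 2)⁻¹ • A) (-(f x ^ 2)⁻¹ • B) x := by
  rw [HasWirtingerDerivAt, wirtingerCLM_smul]
  refine ((hasFDerivAt_inv' hx).comp x hf).congr_fderiv ?_
  ext1 v
  simp only [_root_.smul_apply, ContinuousLinearMap.comp_apply,
    _root_.neg_apply, ContinuousLinearMap.mulLeftRight_apply, smul_eq_mul]
  field_simp

lemma div (hf : HasWirtingerDerivAt f A B x) (hg : HasWirtingerDerivAt g C E x) (hx : g x ≠ 0) :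
    HasWirtingerDerivAt (fun y => f y / g y)
      ((g x ^ 2)⁻¹ • (g x • A - f x • C)) ((g x ^ 2)⁻¹ • (g x • B - f x • E)) x := by
  have h := hf.mul (hg.inv hx)
  simp only [← div_eq_mul_inv] at h
  convert h using 2 <;> ext1 j <;>
    simp only [Pi.add_apply, Pi.sub_apply, Pi.smul_apply, smul_eq_mul] <;> field_simp <;> ring

end HasWirtingerDerivAt

lemma hasWirtingerDerivAt_const (c : ℂ) (x : Fin m → ℂ) :
    HasWirtingerDerivAt (fun _ => c) 0 0 x := by
  rw [HasWirtingerDerivAt, wirtingerCLM_zero]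
  exact hasFDerivAt_const c x

lemma hasWirtingerDerivAt_apply (j : Fin m) (x : Fin m → ℂ) :
    HasWirtingerDerivAt (fun y => y j) (Pi.single j 1) 0 x := by
  refine (hasFDerivAt_apply j x).congr_fderiv ?_
  ext1 v; simp [Pi.single_apply]

lemma hasWirtingerDerivAt_conj_apply (j : Fin m) (x : Fin m → ℂ) :
    HasWirtingerDerivAt (fun y => conj (y j)) 0 (Pi.single j 1) x := by
  refine (conjCLE.toContinuousLinearMap.hasFDerivAt.comp x
    (hasFDerivAt_apply j x)).congr_fderiv ?_
  ext1 v; simp [Pi.single_apply]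

lemma Filter.EventuallyEq.wdqbar_eq {f g : (Fin m → ℂ) → ℂ} {x : Fin m → ℂ}
    (h : f =ᶠ[𝓝 x] g) (j : Fin m) : wdqbar f j x = wdqbar g j x := by
  simp only [wdqbar, pdRe, pdIm, h.fderiv_eq]

lemma lap_eq_four_mul_sum_wdqbar_wdq {f : (Fin m → ℂ) → ℂ} {x : Fin m → ℂ}
    (hf : ContDiffAt ℝ 2 f x) : lap f x = 4 * ∑ j, wdqbar (wdq f j) j x := by
  set D2 := fderiv ℝ (fderiv ℝ f) x
  have hD2 : HasFDerivAt (fderiv ℝ f) D2 x :=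
    ((hf.fderiv_right (m := 1) le_rfl).differentiableAt one_ne_zero).hasFDerivAt
  have hsymm : ∀ v w, D2 v w = D2 w v := hf.isSymmSndFDerivAt (by simp)
  have hdir (v : Fin m → ℂ) : HasFDerivAt (fun y => fderiv ℝ f y v) (D2.flip v) x := by
    simpa using hD2.clm_apply (hasFDerivAt_const v x)
  rw [lap, Finset.mul_sum]
  refine Finset.sum_congr rfl fun j _ => ?_
  have hwdq : HasFDerivAt (wdq f j)
      ((2 : ℂ)⁻¹ • (D2.flip (Pi.single j 1) - I • D2.flip (Pi.single j I))) x := by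
    have h := ((hdir (Pi.single j 1)).fun_sub ((hdir (Pi.single j I)).const_mul I)).const_mul
      (2 : ℂ)⁻¹
    refine h.congr_of_eventuallyEq (Eventually.of_forall fun y => ?_) |>.congr_fderiv ?_
    · simp only [wdq, pdRe, pdIm]; ring
    · ext1 v; simp
  simp only [pdRe, pdIm, wdqbar, (hdir _).fderiv, hwdq.fderiv, _root_.smul_apply,
    _root_.sub_apply, ContinuousLinearMap.flip_apply, smul_eq_mul, hsymm (Pi.single j 1) (Pi.single j I)]
  ring_nf; rw [I_sq]; ring

end Wirtinger

section RationalMorphism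

noncomputable def zNum (y : Fin 3 → ℂ) : ℂ := -(y 2) * (conj (y 0) + conj (y 1)) + y 0 - y 1

noncomputable def zDen (y : Fin 3 → ℂ) : ℂ := conj (y 0) ^ 2 + conj (y 0) * conj (y 1) + conj (y 2)

lemma zRational_eq_div : zRational = fun y => zNum y / zDen y := rfl

-- `∂N/∂q`, `∂N/∂q̄` and `∂D/∂q̄` (while `∂D/∂q = 0`).
noncomputable def zNumGrad (y : Fin 3 → ℂ) : Fin 3 → ℂ := ![1, -1, -(conj (y 0) + conj (y 1))]

-- `∂N/∂q`, `∂N/∂q̄` and `∂D/∂q̄` (while `∂D/∂q = 0`).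
noncomputable def zNumGradBar (y : Fin 3 → ℂ) : Fin 3 → ℂ := ![-(y 2), -(y 2), 0]

noncomputable def zDenGradBar (y : Fin 3 → ℂ) : Fin 3 → ℂ :=
  ![2 * conj (y 0) + conj (y 1), conj (y 0), 1]

lemma zNumGrad_dotProduct_zNumGradBar (y : Fin 3 → ℂ) : zNumGrad y ⬝ᵥ zNumGradBar y = 0 := by
  simp [zNumGrad, zNumGradBar, dotProduct, Fin.sum_univ_three]

lemma zNumGrad_dotProduct_zDenGradBar (y : Fin 3 → ℂ) : zNumGrad y ⬝ᵥ zDenGradBar y = 0 := by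
  simp [zNumGrad, zDenGradBar, dotProduct, Fin.sum_univ_three]; ring

lemma hasWirtingerDerivAt_zNum (x : Fin 3 → ℂ) :
    HasWirtingerDerivAt zNum (zNumGrad x) (zNumGradBar x) x := by
  have h := (((hasWirtingerDerivAt_apply 2 x).neg.mul ((hasWirtingerDerivAt_conj_apply 0 x).add
    (hasWirtingerDerivAt_conj_apply 1 x))).add (hasWirtingerDerivAt_apply 0 x)).sub
    (hasWirtingerDerivAt_apply 1 x)
  convert h using 1 <;> first | rfl | (ext j; fin_cases j <;> simp [zNumGrad, zNumGradBar])

lemma hasWirtingerDerivAt_zDen (x : Fin 3 → ℂ) :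
    HasWirtingerDerivAt zDen 0 (zDenGradBar x) x := by
  have h0 := hasWirtingerDerivAt_conj_apply 0 x
  have h := ((h0.mul h0).add (h0.mul (hasWirtingerDerivAt_conj_apply 1 x))).add
    (hasWirtingerDerivAt_conj_apply 2 x)
  convert h using 1
  · ext y; simp [zDen, sq]
  · simp
  · ext j; fin_cases j <;> simp [zDenGradBar]; ring

lemma continuous_zDen : Continuous zDen := by
  unfold zDen; fun_prop

lemma contDiffAt_zRational {x : Fin 3 → ℂ} (hx : zDen x ≠ 0) : ContDiffAt ℝ 2 zRational x := by
  have hconj (j : Fin 3) : ContDiff ℝ 2 fun y : Fin 3 → ℂ => conj (y j) :=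
    conjCLE.contDiff.comp (contDiff_apply ℝ ℂ j)
  have hN : ContDiff ℝ 2 zNum := by unfold zNum; fun_prop
  have hD : ContDiff ℝ 2 zDen := by unfold zDen; fun_prop
  rw [zRational_eq_div]
  simp only [div_eq_mul_inv]
  exact hN.contDiffAt.mul (hD.contDiffAt.inv hx)

lemma hasWirtingerDerivAt_zRational {x : Fin 3 → ℂ} (hx : zDen x ≠ 0) :
    HasWirtingerDerivAt zRational ((zDen x)⁻¹ • zNumGrad x)
      ((zDen x ^ 2)⁻¹ • (zDen x • zNumGradBar x - zNum x • zDenGradBar x)) x := by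
  have h := (hasWirtingerDerivAt_zNum x).div (hasWirtingerDerivAt_zDen x) hx
  rwa [smul_zero, sub_zero, smul_smul,
    show (zDen x ^ 2)⁻¹ * zDen x = (zDen x)⁻¹ by field_simp] at h

lemma hwc_zRational {x : Fin 3 → ℂ} (hx : zDen x ≠ 0) : hwc zRational x = 0 := by
  simp [(hasWirtingerDerivAt_zRational hx).hwc_eq, dotProduct_sub,
    zNumGrad_dotProduct_zNumGradBar, zNumGrad_dotProduct_zDenGradBar]

lemma exists_hasWirtingerDerivAt_zNumGrad_apply (j : Fin 3) (x : Fin 3 → ℂ) :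
    ∃ B : Fin 3 → ℂ, B j = 0 ∧ HasWirtingerDerivAt (fun y => zNumGrad y j) 0 B x := by
  fin_cases j
  · exact ⟨0, rfl, hasWirtingerDerivAt_const 1 x⟩
  · exact ⟨0, rfl, hasWirtingerDerivAt_const (-1) x⟩
  · have h := ((hasWirtingerDerivAt_conj_apply 0 x).add (hasWirtingerDerivAt_conj_apply 1 x)).neg
    rw [add_zero, neg_zero] at h
    exact ⟨_, by simp, h⟩

lemma lap_zRational {x : Fin 3 → ℂ} (hx : zDen x ≠ 0) : lap zRational x = 0 := by
  have hwdq (j : Fin 3) : wdq zRational j =ᶠ[𝓝 x] fun y => zNumGrad y j / zDen y :=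
    (continuous_zDen.continuousAt.eventually_ne hx).mono fun y hy => by
      rw [(hasWirtingerDerivAt_zRational hy).wdq_eq, Pi.smul_apply, smul_eq_mul, inv_mul_eq_div]
  have hterm (j : Fin 3) : wdqbar (wdq zRational j) j x
      = -(zDen x ^ 2)⁻¹ * (zNumGrad x j * zDenGradBar x j) := by
    obtain ⟨B, hBj, hB⟩ := exists_hasWirtingerDerivAt_zNumGrad_apply j x
    rw [(hwdq j).wdqbar_eq, (hB.div (hasWirtingerDerivAt_zDen x) hx).wdqbar_eq]
    simp [hBj]
  rw [lap_eq_four_mul_sum_wdqbar_wdq (contDiffAt_zRational hx)]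
  simp only [hterm, ← Finset.mul_sum]
  rw [show ∑ j, zNumGrad x j * zDenGradBar x j = zNumGrad x ⬝ᵥ zDenGradBar x from rfl,
    zNumGrad_dotProduct_zDenGradBar, mul_zero, mul_zero]

end RationalMorphism

/-- explicit rational harmonic morphism on `ℝ⁶`: on the open set
`U = {q : (q̄¹)² + q̄¹q̄² + q̄³ ≠ 0}` the map `zRational` satisfies `Δz¹ = 0`
and `Σ_{i=1}^6 (∂z¹/∂x^i)² = 0`, i.e. it is a harmonic morphism `U → ℂ`. -/
theorem rational_harmonic_morphism :
    ∀ q : Fin 3 → ℂ,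
      (starRingEnd ℂ (q 0)) ^ 2 + starRingEnd ℂ (q 0) * starRingEnd ℂ (q 1)
          + starRingEnd ℂ (q 2) ≠ 0 →
      lap zRational q = 0 ∧ hwc zRational q = 0 :=
  fun _ hq => ⟨lap_zRational hq, hwc_zRational hq⟩
end
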